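/- arXiv:1710.03148 — 2 statements merged into one kernel-verified Lean document; each statement's English description precedes it below -/
import Mathlib

section
/- Let A, B be valued σ-structures. Then A ≼ B (A improves B) if and only if for every mapping c : Tup(B) → ℚ≥0 there exists a mapping h : A → B such that Σ_{(f,x)∈Tup(B)} c(f,x)·f^B(x) ≥ Σ_{(f,x)∈Tup(A)} c(f,h(x))·f^A(x). -/
open scoped Classical
noncomputable section

/-- The value codomain `ℚ≥0 ∪ {∞}`. -/
abbrev Val : Type := WithTop NNRat

/-- A valued structure over a signature given by a type `S` of function symbols
with arities `ar`. -/
structure VStruct (S : Type) (ar : S → ℕ) where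
  U : Type
  [fintypeU : Fintype U]
  [decU : DecidableEq U]
  [nonemptyU : Nonempty U]
  val : (f : S) → (Fin (ar f) → U) → Val

attribute [instance] VStruct.fintypeU VStruct.decU VStruct.nonemptyU

variable {S : Type} [Fintype S] {ar : S → ℕ}

/-- Cost of a mapping `h` between the universes of two valued structures. -/
def VStruct.cost (A B : VStruct S ar) (h : A.U → B.U) : Val :=
  ∑ f : S, ∑ x : Fin (ar f) → A.U, A.val f x * B.val f (h ∘ x)

/-- `opt(A,B)`: the minimum cost over all mappings. -/
def VStruct.opt (A B : VStruct S ar) : Val :=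
  Finset.univ.inf' Finset.univ_nonempty (A.cost B)

/-- `f^A(g⁻¹(x))`: sum of `f^A` over the `g`-preimage of the tuple `x`. -/
def VStruct.preSum (A B : VStruct S ar) (g : A.U → B.U) (f : S)
    (x : Fin (ar f) → B.U) : Val :=
  ∑ y ∈ Finset.univ.filter (fun y : Fin (ar f) → A.U => g ∘ y = x), A.val f y

/-- Inverse fractional homomorphism from `A` to `B`. -/
def IsIFH (A B : VStruct S ar) (ω : (A.U → B.U) → NNRat) : Prop :=
  (∑ g : A.U → B.U, ω g) = 1 ∧
  ∀ (f : S) (x : Fin (ar f) → B.U),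
    (∑ g : A.U → B.U, (ω g : Val) * A.preSum B g f x) ≤ B.val f x

/-- `A ≼ B`: `A` improves `B`. -/
def Improves (A B : VStruct S ar) : Prop :=
  ∀ C : VStruct S ar, A.opt C ≤ B.opt C

/-- Valued equivalence. -/
def VEquiv (A B : VStruct S ar) : Prop :=
  ∀ C : VStruct S ar, A.opt C = B.opt C

/-- A valued structure is a core if every inverse fractional homomorphism from
it to itself has only surjective mappings in its support. -/
def IsCore (A : VStruct S ar) : Prop :=
  ∀ ω : (A.U → A.U) → NNRat, IsIFH A A ω →
    ∀ g : A.U → A.U, 0 < ω g → Function.Surjective g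

namespace Val

lemma coe_untopD_mul {v a : Val} (N : NNRat) (h : v ≠ ⊤ ∨ a = 0) :
    (v.untopD N : NNRat) * a = v * a := by
  rcases h with hv | rfl
  · obtain ⟨d, rfl⟩ := WithTop.ne_top_iff_exists.mp hv
    rfl
  · simp

lemma exists_lt_mul (V : NNRat) {a : Val} (ha : a ≠ 0) : ∃ N : NNRat, (V : Val) < N * a := by
  induction a using WithTop.recTopCoe with
  | top => exact ⟨1, by simp⟩
  | coe q =>
    have hq : q ≠ 0 := by exact_mod_cast ha
    refine ⟨V / q + 1, ?_⟩
    rw [← WithTop.coe_mul, WithTop.coe_lt_coe, add_mul, div_mul_cancel₀ V hq, one_mul]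
    exact lt_add_of_pos_right V (pos_iff_ne_zero.mpr hq)

lemma exists_forall_lt_mul {ι : Type*} [Finite ι] (V : NNRat) (a : ι → Val) :
    ∃ N : NNRat, ∀ i, a i ≠ 0 → (V : Val) < N * a i := by
  have hN : ∀ i, ∃ N : NNRat, a i ≠ 0 → (V : Val) < N * a i := fun i => by
    by_cases hi : a i = 0
    · exact ⟨0, fun h => (h hi).elim⟩
    · exact (exists_lt_mul V hi).imp fun _ hN _ => hN
  choose N hN using hN
  obtain ⟨M, hM⟩ := Finite.exists_le N
  refine ⟨M, fun i hi => (hN i hi).trans_le ?_⟩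
  gcongr
  exact_mod_cast hM i

end Val

namespace VStruct

def weightedSum (A : VStruct S ar) (c : (f : S) → (Fin (ar f) → A.U) → Val) : Val :=
  ∑ f : S, ∑ x : Fin (ar f) → A.U, c f x * A.val f x

def withVal (A : VStruct S ar) (c : (f : S) → (Fin (ar f) → A.U) → Val) : VStruct S ar :=
  { U := A.U, val := c }

variable (A B : VStruct S ar)

lemma cost_eq_weightedSum (h : A.U → B.U) :
    A.cost B h = A.weightedSum fun f x => B.val f (h ∘ x) := by
  simp only [cost, weightedSum, mul_comm]

lemma mul_le_weightedSum (c : (f : S) → (Fin (ar f) → A.U) → Val) (f : S)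
    (x : Fin (ar f) → A.U) : c f x * A.val f x ≤ A.weightedSum c :=
  calc c f x * A.val f x ≤ ∑ x, c f x * A.val f x :=
        Finset.single_le_sum_of_canonicallyOrdered (f := fun x => c f x * A.val f x)
          (Finset.mem_univ x)
    _ ≤ A.weightedSum c := Finset.single_le_sum_of_canonicallyOrdered
        (f := fun f => ∑ x, c f x * A.val f x) (Finset.mem_univ f)

lemma weightedSum_untopD {c : (f : S) → (Fin (ar f) → A.U) → Val} (N : NNRat)
    (hc : ∀ f x, c f x ≠ ⊤ ∨ A.val f x = 0) :
    (A.weightedSum fun f x => ((c f x).untopD N : NNRat)) = A.weightedSum c :=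
  Finset.sum_congr rfl fun f _ => Finset.sum_congr rfl fun x _ => Val.coe_untopD_mul N (hc f x)

lemma exists_cost_eq_opt (C : VStruct S ar) : ∃ h, A.cost C h = A.opt C :=
  let ⟨h, _, hh⟩ := Finset.exists_mem_eq_inf' Finset.univ_nonempty (A.cost C)
  ⟨h, hh.symm⟩

lemma opt_le_cost (C : VStruct S ar) (h : A.U → C.U) : A.opt C ≤ A.cost C h :=
  Finset.inf'_le _ (Finset.mem_univ h)

end VStruct

open VStruct

variable {A B : VStruct S ar}

lemma Improves.exists_weightedSum_le (hAB : Improves A B)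
    (c : (f : S) → (Fin (ar f) → B.U) → Val) :
    ∃ h : A.U → B.U, (A.weightedSum fun f x => c f (h ∘ x)) ≤ B.weightedSum c := by
  let C := B.withVal c
  obtain ⟨h, hh⟩ := A.exists_cost_eq_opt C
  refine ⟨h, ?_⟩
  calc (A.weightedSum fun f x => c f (h ∘ x)) = A.opt C := by rw [← hh, cost_eq_weightedSum]; rfl
    _ ≤ B.opt C := hAB C
    _ ≤ B.cost C id := B.opt_le_cost C id
    _ = B.weightedSum c := B.cost_eq_weightedSum C id

/-- A witness `g` of `opt(B,C)` is turned into the weighting `c(f,y) = f^C(g(y))`, with the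
infinite values replaced by a rational `N` so large that no tuple of positive weight in `A`
can be sent by `h` to such a tuple without exceeding `opt(B,C)`; then `g ∘ h` witnesses
`opt(A,C) ≤ opt(B,C)`. -/
lemma improves_of_forall_exists_weightedSum_le
    (hc : ∀ c : (f : S) → (Fin (ar f) → B.U) → NNRat, ∃ h : A.U → B.U,
      (A.weightedSum fun f x => (c f (h ∘ x) : Val)) ≤ B.weightedSum fun f x => (c f x : Val)) :
    Improves A B := by
  intro C
  obtain ⟨g, hg⟩ := B.exists_cost_eq_opt C
  rw [← hg]
  rcases eq_or_ne (B.cost C g) ⊤ with htop | hfin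
  · exact htop ▸ le_top
  obtain ⟨V, hV⟩ := WithTop.ne_top_iff_exists.mp hfin
  obtain ⟨N, hN⟩ := Val.exists_forall_lt_mul V fun p : Σ f, Fin (ar f) → A.U => A.val p.1 p.2
  obtain ⟨h, hh⟩ := hc fun f y => (C.val f (g ∘ y)).untopD N
  rw [cost_eq_weightedSum] at hV
  have hB : (B.weightedSum fun f y => ((C.val f (g ∘ y)).untopD N : NNRat)) = V := by
    rw [B.weightedSum_untopD N fun f x => ?_, hV]
    by_contra! hx
    have hle := B.mul_le_weightedSum (fun f y => C.val f (g ∘ y)) f x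
    rw [hx.1, WithTop.top_mul hx.2, ← hV] at hle
    exact WithTop.coe_ne_top (top_le_iff.mp hle)
  have hA : (A.weightedSum fun f x => ((C.val f (g ∘ h ∘ x)).untopD N : NNRat)) =
      A.cost C (g ∘ h) := by
    rw [A.weightedSum_untopD N fun f x => ?_, cost_eq_weightedSum]
    · rfl
    by_contra! hx
    have hle := A.mul_le_weightedSum _ f x |>.trans (hh.trans hB.le)
    rw [hx.1, WithTop.untopD_top] at hle
    exact (hN ⟨f, x⟩ hx.2).not_ge hle
  calc A.opt C ≤ A.cost C (g ∘ h) := A.opt_le_cost C (g ∘ h)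
    _ ≤ V := hA ▸ hB ▸ hh
    _ = B.cost C g := by rw [cost_eq_weightedSum, hV]

/-- Characterisation of improvement in terms of weightings of the tuples of
`B`. -/
theorem stmt12 (A B : VStruct S ar) :
    Improves A B ↔
    ∀ c : (f : S) → (Fin (ar f) → B.U) → NNRat,
      ∃ h : A.U → B.U,
        (∑ f : S, ∑ x : Fin (ar f) → A.U, (c f (h ∘ x) : Val) * A.val f x) ≤
        (∑ f : S, ∑ x : Fin (ar f) → B.U, (c f x : Val) * B.val f x) :=
  ⟨fun hAB c => hAB.exists_weightedSum_le fun f x => c f x,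
    improves_of_forall_exists_weightedSum_le⟩
end
end

section
/- Let A, B be valued σ-structures. Then A ≼ B (i.e., opt(A,C) ≤ opt(B,C) for all valued σ-structures C) if and only if there exists an inverse fractional homomorphism from A to B. -/
open scoped Classical
noncomputable section

variable {S : Type} [Fintype S] {ar : S → ℕ}

/-!
If `h : B → C` is optimal, averaging the cost of `h ∘ g` over `g ∼ ω` gives `opt(A, C) ≤ opt(B, C)`.

Conversely, the existence of `ω` is the feasibility of a finite rational linear program, with one
variable for each map whose preimage sums are finite on the tuples where `B` is finite. If it is
infeasible, Farkas' lemma yields weights `y > 0` on the tuples with `∑ y · f^B < ∑ y · f^A(g⁻¹(·))`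
for every such `g`. On the structure `C` with the universe of `B` and valuation `y` (and `0` where
`B` is infinite), the identity `B → C` is then cheaper than every such `g`, and every other map
`A → C` costs `∞` since `y > 0`.
-/

open Finset

section Farkas

variable {K V : Type*} [Field K] [LinearOrder K] [IsStrictOrderedRing K]
  [AddCommGroup V] [Module K V]

/-- The Farkas–Bartl lemma. -/
theorem exists_nonneg_eq_sum_smul_of_le_zero {ι : Type*} (t : Finset ι)
    (a : ι → V →ₗ[K] K) (b : V →ₗ[K] K) (h : ∀ v, (∀ i ∈ t, a i v ≤ 0) → b v ≤ 0) :
    ∃ y : ι → K, (∀ i, 0 ≤ y i) ∧ b = ∑ i ∈ t, y i • a i := by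
  induction t using Finset.induction_on generalizing a b with
  | empty =>
    refine ⟨0, fun _ => le_rfl, LinearMap.ext fun v => ?_⟩
    have h₁ := h v (by simp)
    have h₂ := h (-v) (by simp)
    simp only [map_neg, neg_nonpos] at h₂
    simpa using le_antisymm h₁ h₂
  | insert j t hj ih =>
    have extend : ∀ (y : ι → K) (c : K),
        ∑ i ∈ insert j t, Function.update y j c i • a i = c • a j + ∑ i ∈ t, y i • a i := by
      intro y c
      rw [sum_insert hj, Function.update_self]
      congr 1
      exact sum_congr rfl fun i hi => by rw [Function.update_of_ne (ne_of_mem_of_not_mem hi hj)]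
    have update_nonneg : ∀ (y : ι → K) (c : K), (∀ i, 0 ≤ y i) → 0 ≤ c →
        ∀ i, 0 ≤ Function.update y j c i := fun y _ hy hc =>
      (Function.forall_update_iff y fun _ r => 0 ≤ r).2 ⟨hc, fun i _ => hy i⟩
    by_cases hrest : ∀ v, (∀ i ∈ t, a i v ≤ 0) → b v ≤ 0
    · obtain ⟨y, hy, rfl⟩ := ih a b hrest
      exact ⟨Function.update y j 0, update_nonneg y 0 hy le_rfl, by
        rw [extend y 0, zero_smul, zero_add]⟩
    push Not at hrest
    obtain ⟨u, hu, hbu⟩ := hrest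
    have hau : 0 < a j u := by
      by_contra! hle
      refine (h u fun i hi => ?_).not_gt hbu
      rcases mem_insert.1 hi with rfl | hi
      exacts [hle, hu i hi]
    -- Normalise `u` so that `a j u = 1`, and project along it onto the kernel of `a j`.
    set u₀ := (a j u)⁻¹ • u
    have hau₀ : a j u₀ = 1 := by simp [u₀, hau.ne']
    have hu₀ : ∀ i ∈ t, a i u₀ ≤ 0 := fun i hi => by
      simpa [u₀] using mul_nonpos_of_nonneg_of_nonpos (inv_nonneg.2 hau.le) (hu i hi)
    have hbu₀ : 0 < b u₀ := by simpa [u₀] using mul_pos (inv_pos.2 hau) hbu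
    set T : V →ₗ[K] V := LinearMap.id - (a j).smulRight u₀
    have hT : ∀ v, T v = v - a j v • u₀ := fun v => rfl
    have haT : ∀ v, a j (T v) = 0 := fun v => by simp [hT, hau₀]
    obtain ⟨y, hy, hyb⟩ := ih (fun i => a i ∘ₗ T) (b ∘ₗ T) fun v hv =>
      h (T v) fun i hi => by
        rcases mem_insert.1 hi with rfl | hi
        exacts [(haT v).le, hv i hi]
    set c := b u₀ - ∑ i ∈ t, y i * a i u₀
    have hc : 0 ≤ c := by
      have : ∑ i ∈ t, y i * a i u₀ ≤ 0 :=
        sum_nonpos fun i hi => mul_nonpos_of_nonneg_of_nonpos (hy i) (hu₀ i hi)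
      linarith
    refine ⟨Function.update y j c, update_nonneg y c hy hc, ?_⟩
    rw [extend y c]
    ext v
    have hbv := LinearMap.congr_fun hyb v
    simp only [LinearMap.comp_apply, LinearMap.sum_apply, LinearMap.smul_apply, smul_eq_mul, hT,
      map_sub, map_smul] at hbv
    simp only [LinearMap.add_apply, LinearMap.smul_apply, LinearMap.sum_apply, smul_eq_mul, c]
    rw [sub_eq_iff_eq_add.1 hbv]
    simp only [mul_sub, sum_sub_distrib, mul_left_comm _ (a j v), ← mul_sum]
    ring

theorem exists_nonneg_weights_of_not_feasible {G ι : Type*} [Fintype G] [Fintype ι]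
    (s : Finset G) (v : G → ι → K) (b : ι → K) (hb : ∀ i, 0 ≤ b i)
    (h : ¬ ∃ ω : G → K, (∀ g, 0 ≤ ω g) ∧ ∑ g ∈ s, ω g = 1 ∧ ∀ i, ∑ g ∈ s, ω g * v g i ≤ b i) :
    ∃ y : ι → K, (∀ i, 0 ≤ y i) ∧ ∀ g ∈ s, ∑ i, y i * b i + 1 ≤ ∑ i, y i * v g i := by
  -- Homogenise in `(ω, t)`: on the cone `0 ≤ ω`, `t ≤ ∑ g ∈ s, ω g`, `∑ g ∈ s, ω g • v g ≤ t • b`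
  -- we have `t ≤ 0`, since a point with `0 < t` rescales (using `0 ≤ b`) to a feasible `ω`.
  let ωc : G → (G → K) × K →ₗ[K] K := fun g => LinearMap.proj g ∘ₗ LinearMap.fst K (G → K) K
  let tc : (G → K) × K →ₗ[K] K := LinearMap.snd K (G → K) K
  let a : Option (G ⊕ ι) → (G → K) × K →ₗ[K] K
    | none => tc - ∑ g ∈ s, ωc g
    | some (.inl g) => -ωc g
    | some (.inr i) => ∑ g ∈ s, v g i • ωc g - b i • tc
  obtain ⟨y, hy, hyt⟩ := exists_nonneg_eq_sum_smul_of_le_zero univ a tc (by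
    rintro ⟨ω, t⟩ hωt
    by_contra! ht
    have hω : ∀ g, 0 ≤ ω g := fun g => by simpa [a, ωc] using hωt (some (.inl g)) (mem_univ _)
    have hσ : t ≤ ∑ g ∈ s, ω g := by simpa [a, ωc, tc] using hωt none (mem_univ _)
    have hV : ∀ i, ∑ g ∈ s, ω g * v g i ≤ t * b i := fun i => by
      simpa [a, ωc, tc, mul_comm] using hωt (some (.inr i)) (mem_univ _)
    set σ := ∑ g ∈ s, ω g
    have hσpos : 0 < σ := ht.trans_le hσ
    refine h ⟨σ⁻¹ • ω, fun g => mul_nonneg (inv_nonneg.2 hσpos.le) (hω g), ?_, fun i => ?_⟩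
    · simp [← mul_sum, σ, hσpos.ne']
    · calc ∑ g ∈ s, (σ⁻¹ • ω) g * v g i = σ⁻¹ * ∑ g ∈ s, ω g * v g i := by
            simp [mul_sum, mul_assoc]
        _ ≤ σ⁻¹ * (σ * b i) := by gcongr; exact (hV i).trans (by gcongr; exact hb i)
        _ = b i := by field_simp)
  refine ⟨fun i => y (some (.inr i)), fun i => hy _, fun g hg => ?_⟩
  have eval : ∀ x : (G → K) × K, x.2 = y none * (x.2 - ∑ g ∈ s, x.1 g)
      + ∑ g, y (some (.inl g)) * -x.1 g
      + ∑ i, y (some (.inr i)) * (∑ g ∈ s, v g i * x.1 g - b i * x.2) := fun x => by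
    simpa [a, ωc, tc, Fintype.sum_option, Fintype.sum_sum_type, add_assoc]
      using LinearMap.congr_fun hyt x
  have h₁ := eval (0, 1)
  have h₂ := eval (Pi.single g 1, 0)
  simp only [Pi.zero_apply, sum_const_zero, sub_zero, mul_one, neg_zero, mul_zero, add_zero,
    zero_sub, mul_neg, sum_neg_distrib] at h₁
  simp only [Pi.single_apply, sum_ite_eq', hg, ↓reduceIte, zero_sub, mul_neg, mul_one, mul_ite,
    mul_zero, sum_neg_distrib, mem_univ, sub_zero] at h₂
  have := hy (some (.inl g))
  linarith

theorem exists_pos_weights_of_not_feasible {G ι : Type*} [Fintype G] [Fintype ι]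
    (s : Finset G) (v : G → ι → K) (b : ι → K) (hv : ∀ g i, 0 ≤ v g i) (hb : ∀ i, 0 ≤ b i)
    (h : ¬ ∃ ω : G → K, (∀ g, 0 ≤ ω g) ∧ ∑ g ∈ s, ω g = 1 ∧ ∀ i, ∑ g ∈ s, ω g * v g i ≤ b i) :
    ∃ y : ι → K, (∀ i, 0 < y i) ∧ ∀ g ∈ s, ∑ i, y i * b i < ∑ i, y i * v g i := by
  obtain ⟨y, hy, hyv⟩ := exists_nonneg_weights_of_not_feasible s v b hb h
  have hB : 0 ≤ ∑ i, b i := sum_nonneg fun i _ => hb i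
  set ε := (∑ i, b i + 1)⁻¹
  have hε : 0 < ε := by positivity
  have hεB : ε * ∑ i, b i < 1 := by
    rw [inv_mul_lt_one₀ (by positivity)]
    linarith
  refine ⟨fun i => y i + ε, fun i => by linarith [hy i], fun g hg => ?_⟩
  calc ∑ i, (y i + ε) * b i = ∑ i, y i * b i + ε * ∑ i, b i := by
        simp only [add_mul, sum_add_distrib, mul_sum]
    _ < ∑ i, y i * b i + 1 := by linarith
    _ ≤ ∑ i, y i * v g i := hyv g hg
    _ ≤ ∑ i, (y i + ε) * v g i := by gcongr with i; exacts [hv g i, le_add_of_nonneg_right hε.le]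

end Farkas

namespace VStruct

variable (A B : VStruct S ar)

theorem cost_comp (C : VStruct S ar) (g : A.U → B.U) (h : B.U → C.U) :
    A.cost C (h ∘ g) = ∑ f, ∑ x : Fin (ar f) → B.U, A.preSum B g f x * C.val f (h ∘ x) := by
  refine sum_congr rfl fun f _ => ?_
  rw [← sum_fiberwise univ (g ∘ ·)]
  refine sum_congr rfl fun x _ => ?_
  rw [preSum, sum_mul]
  exact sum_congr rfl fun y hy => by rw [Function.comp_assoc, (mem_filter.1 hy).2]

theorem improves_of_isIFH {ω : (A.U → B.U) → ℚ≥0} (hω : IsIFH A B ω) : Improves A B := by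
  obtain ⟨hω₁, hωB⟩ := hω
  intro C
  obtain ⟨h, -, hh⟩ := exists_mem_eq_inf' univ_nonempty (B.cost C)
  calc A.opt C = ∑ g, (ω g : Val) * A.opt C := by
        rw [← sum_mul, ← WithTop.coe_sum, hω₁, WithTop.coe_one, one_mul]
    _ ≤ ∑ g, (ω g : Val) * A.cost C (h ∘ g) := by
        gcongr with g
        exact inf'_le _ (mem_univ _)
    _ = ∑ f, ∑ x, (∑ g, (ω g : Val) * A.preSum B g f x) * C.val f (h ∘ x) := by
        simp only [cost_comp, mul_sum, sum_mul, mul_assoc]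
        rw [sum_comm]
        exact sum_congr rfl fun f _ => sum_comm
    _ ≤ ∑ f, ∑ x, B.val f x * C.val f (h ∘ x) := by
        gcongr with f _ x
        exact hωB f x
    _ = B.opt C := hh.symm

/-- Only these maps can carry weight in an inverse fractional homomorphism. -/
def admissibleMaps : Finset (A.U → B.U) :=
  univ.filter fun g => ∀ f x, B.val f x ≠ ⊤ → A.preSum B g f x ≠ ⊤

/-- The coefficient of `ω g` in the linear program behind `IsIFH`; it is `0` on tuples where `f^B`
is infinite, which impose no constraint. -/
def finitePreSum (g : A.U → B.U) (p : Σ f : S, Fin (ar f) → B.U) : ℚ≥0 :=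
  if B.val p.1 p.2 = ⊤ then 0 else (A.preSum B g p.1 p.2).untop₀

theorem exists_isIFH_of_feasible (ω : (A.U → B.U) → ℚ) (hω₀ : ∀ g, 0 ≤ ω g)
    (hω₁ : ∑ g ∈ admissibleMaps A B, ω g = 1)
    (hωB : ∀ p : Σ f : S, Fin (ar f) → B.U,
      ∑ g ∈ admissibleMaps A B, ω g * finitePreSum A B g p ≤ (B.val p.1 p.2).untop₀) :
    ∃ ω, IsIFH A B ω := by
  refine ⟨fun g => if g ∈ admissibleMaps A B then (ω g).toNNRat else 0, ?_, fun f x => ?_⟩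
  · rw [Fintype.sum_ite_mem, ← NNRat.coe_inj]
    push_cast [Rat.coe_toNNRat _ (hω₀ _)]
    exact hω₁
  by_cases hx : B.val f x = ⊤
  · exact hx ▸ le_top
  have hfin : ∀ g ∈ admissibleMaps A B,
      A.preSum B g f x = (finitePreSum A B g ⟨f, x⟩ : Val) := fun g hg => by
    rw [finitePreSum, if_neg hx, WithTop.coe_untop₀_of_ne_top ((mem_filter.1 hg).2 f x hx)]
  calc ∑ g, ((if g ∈ admissibleMaps A B then (ω g).toNNRat else 0 : ℚ≥0) : Val) * A.preSum B g f x
      = ((∑ g ∈ admissibleMaps A B, (ω g).toNNRat * finitePreSum A B g ⟨f, x⟩ : ℚ≥0) : Val) := by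
        simp only [apply_ite, WithTop.coe_zero, ite_mul, zero_mul, Fintype.sum_ite_mem]
        push_cast
        exact sum_congr rfl fun g hg => by rw [hfin g hg]
    _ ≤ ((B.val f x).untop₀ : Val) := by
        rw [WithTop.coe_le_coe, ← NNRat.coe_le_coe]
        push_cast [Rat.coe_toNNRat _ (hω₀ _)]
        exact hωB ⟨f, x⟩
    _ = B.val f x := WithTop.coe_untop₀_of_ne_top hx

def weighted (y : (Σ f : S, Fin (ar f) → B.U) → ℚ≥0) : VStruct S ar where
  U := B.U
  val f x := if B.val f x = ⊤ then 0 else y ⟨f, x⟩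

variable (y : (Σ f : S, Fin (ar f) → B.U) → ℚ≥0)

theorem cost_weighted (g : A.U → B.U) :
    A.cost (B.weighted y) g = ∑ f, ∑ x, A.preSum B g f x * (B.weighted y).val f x :=
  cost_comp A B (B.weighted y) g id

theorem cost_weighted_id :
    B.cost (B.weighted y) id = ((∑ p, (B.val p.1 p.2).untop₀ * y p : ℚ≥0) : Val) := by
  rw [WithTop.coe_sum, Fintype.sum_sigma]
  refine sum_congr rfl fun f _ => sum_congr rfl fun x _ => ?_
  by_cases hx : B.val f x = ⊤
  · simp [weighted, hx]
  · simp [weighted, hx, WithTop.coe_untop₀_of_ne_top hx]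

theorem cost_weighted_of_mem {g : A.U → B.U} (hg : g ∈ admissibleMaps A B) :
    A.cost (B.weighted y) g = ((∑ p, finitePreSum A B g p * y p : ℚ≥0) : Val) := by
  rw [cost_weighted, WithTop.coe_sum, Fintype.sum_sigma]
  refine sum_congr rfl fun f _ => sum_congr rfl fun x _ => ?_
  by_cases hx : B.val f x = ⊤
  · simp [weighted, finitePreSum, hx]
  · simp [weighted, finitePreSum, hx,
      WithTop.coe_untop₀_of_ne_top ((mem_filter.1 hg).2 f x hx)]

theorem cost_weighted_of_not_mem (hy : ∀ p, 0 < y p) {g : A.U → B.U}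
    (hg : g ∉ admissibleMaps A B) : A.cost (B.weighted y) g = ⊤ := by
  simp only [admissibleMaps, mem_filter, mem_univ, true_and, not_forall, not_not] at hg
  obtain ⟨f, x, hx, hgx⟩ := hg
  rw [cost_weighted, WithTop.sum_eq_top]
  refine ⟨f, mem_univ _, WithTop.sum_eq_top.2 ⟨x, mem_univ _, ?_⟩⟩
  simp [weighted, hx, hgx, (hy _).ne']

theorem not_improves_of_pos_weights (hy : ∀ p, 0 < y p)
    (hlt : ∀ g ∈ admissibleMaps A B,
      ∑ p, (B.val p.1 p.2).untop₀ * y p < ∑ p, finitePreSum A B g p * y p) :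
    ¬ Improves A B := fun himp => by
  have hid : B.cost (B.weighted y) id < A.opt (B.weighted y) := by
    refine (lt_inf'_iff _).2 fun g _ => ?_
    by_cases hg : g ∈ admissibleMaps A B
    · rw [cost_weighted_id, cost_weighted_of_mem A B y hg]
      exact WithTop.coe_lt_coe.2 (hlt g hg)
    · rw [cost_weighted_of_not_mem A B y hy hg, cost_weighted_id]
      exact WithTop.coe_lt_top _
  exact (himp _).not_gt (hid.trans_le' (inf'_le _ (mem_univ id)))

theorem exists_isIFH_of_improves (h : Improves A B) : ∃ ω, IsIFH A B ω := by
  by_contra hno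
  obtain ⟨y, hy, hyv⟩ := exists_pos_weights_of_not_feasible (admissibleMaps A B)
    (fun g p => (finitePreSum A B g p : ℚ)) (fun p => ((B.val p.1 p.2).untop₀ : ℚ))
    (fun _ _ => NNRat.cast_nonneg _) (fun _ => NNRat.cast_nonneg _)
    fun ⟨ω, hω₀, hω₁, hωB⟩ => hno (exists_isIFH_of_feasible A B ω hω₀ hω₁ hωB)
  refine not_improves_of_pos_weights A B (fun p => (y p).toNNRat)
    (fun p => Rat.toNNRat_pos.2 (hy p)) (fun g hg => ?_) h
  rw [← NNRat.coe_lt_coe]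
  push_cast [Rat.coe_toNNRat _ (hy _).le]
  simpa only [mul_comm] using hyv g hg

end VStruct

/-- `A` improves `B` iff there exists an inverse fractional homomorphism from
`A` to `B`. -/
theorem stmt13 (A B : VStruct S ar) :
    Improves A B ↔ ∃ ω : (A.U → B.U) → NNRat, IsIFH A B ω :=
  ⟨A.exists_isIFH_of_improves B, fun ⟨_, hω⟩ => A.improves_of_isIFH B hω⟩
end
end
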